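/- arXiv:1804.10526 — 8 statements merged into one kernel-verified Lean document; each statement's English description precedes it below -/
import Mathlib

section
/- If a step of the explicit Euler method is monotone in a convex functional (seminorm) ‖·‖, i.e. ‖u + Δt F(u)‖ ≤ ‖u‖ for all u and all 0 ≤ Δt ≤ Δt_FE, then a convex combination x = Σ_j α_j (y_j + (β_j/α_j) Δt F(y_j)) with α_j ≥ 0, Σ_j α_j = 1 satisfies ‖x‖ ≤ max_j ‖y_j‖ provided Δt · β_j/α_j ≤ Δt_FE for all j. -/
/-- If forward Euler is monotone in the convex functional `N` for
step sizes `0 ≤ h ≤ dtFE`, then a convex combination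
`x = Σ_j α_j (y_j + (β_j/α_j) Δt F(y_j))` with `α_j > 0`, `Σ α_j = 1`, `β_j ≥ 0`
satisfies `N x ≤ max_j N (y_j)` provided `Δt * β_j / α_j ≤ dtFE` for all j. -/
theorem ssp_convex_combination_forward_euler
    {V : Type*} [AddCommGroup V] [Module ℝ V]
    (N : V → ℝ)
    (hadd : ∀ v w : V, N (v + w) ≤ N v + N w)
    (hhom : ∀ (c : ℝ) (v : V), N (c • v) = |c| * N v)
    (F : V → V) (dtFE : ℝ)
    (hFE : ∀ (v : V) (h : ℝ), 0 ≤ h → h ≤ dtFE → N (v + h • F v) ≤ N v)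
    (n : ℕ) (hn : 0 < n)
    (α β : Fin n → ℝ) (y : Fin n → V) (Δt : ℝ) (hΔt : 0 ≤ Δt)
    (hα : ∀ j, 0 < α j) (hβ : ∀ j, 0 ≤ β j)
    (hsum : ∑ j, α j = 1)
    (hstep : ∀ j, Δt * (β j / α j) ≤ dtFE)
    (x : V)
    (hx : x = ∑ j, (α j) • (y j + ((β j / α j) * Δt) • F (y j))) :
    N x ≤ Finset.univ.sup' (Finset.univ_nonempty_iff.mpr ⟨⟨0, hn⟩⟩)
      (fun j => N (y j)) := by
  have hN0 : N 0 = 0 := by simpa using hhom 0 0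
  have hsub : ∀ (s : Finset (Fin n)) (f : Fin n → V),
      N (∑ j ∈ s, f j) ≤ ∑ j ∈ s, N (f j) := by
    intro s f
    induction s using Finset.cons_induction with
    | empty => simp [hN0]
    | cons a s ha ih =>
      rw [Finset.sum_cons, Finset.sum_cons]
      exact le_trans (hadd _ _) (by linarith)
  set M := Finset.univ.sup' (Finset.univ_nonempty_iff.mpr ⟨⟨0, hn⟩⟩)
      (fun j => N (y j)) with hM
  have key : ∀ j, N (α j • (y j + ((β j / α j) * Δt) • F (y j))) ≤ α j * M := by
    intro j
    rw [hhom, abs_of_pos (hα j)]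
    have h1 : N (y j + ((β j / α j) * Δt) • F (y j)) ≤ N (y j) :=
      hFE _ _ (mul_nonneg (div_nonneg (hβ j) (hα j).le) hΔt)
        (by rw [mul_comm]; exact hstep j)
    have h2 : N (y j) ≤ M := Finset.le_sup' (fun j => N (y j)) (Finset.mem_univ j)
    exact mul_le_mul_of_nonneg_left (h1.trans h2) (hα j).le
  calc N x ≤ ∑ j, N (α j • (y j + ((β j / α j) * Δt) • F (y j))) := by
        rw [hx]; exact hsub _ _
    _ ≤ ∑ j, α j * M := Finset.sum_le_sum (fun j _ => key j)
    _ = M := by rw [← Finset.sum_mul, hsum, one_mul]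
end

section
/- Consequently, if F satisfies the forward Euler monotonicity condition ‖u + h F(u)‖ ≤ ‖u‖ for 0 ≤ h ≤ Δt_FE and G satisfies the second-derivative condition ‖u + h² G(u)‖ ≤ ‖u‖ for 0 ≤ h ≤ K̃·Δt_FE, then the Taylor series step satisfies ‖u + h F(u) + (1/2) h² G(u)‖ ≤ ‖u‖ for all 0 ≤ h ≤ K·Δt_FE where K = K̃(√(K̃²+2) − K̃). -/
/-!
Write `α = h / Δt_FE`. Then `u + hF(u) + ½h²G(u)` is the convex combination, with weights `α` and
`1 - α`, of a full forward Euler step `u + Δt_FE F(u)` and a second-derivative step `u + τ² G(u)`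
with `τ² = h² / (2(1 - α))`. Both steps are admissible exactly when `α` lies below the positive root
`K = K̃(√(K̃² + 2) - K̃)` of `α² + 2K̃²α - 2K̃² = 0`, and sublevel sets of a seminorm are convex.
-/

open Real

theorem convex_setOf_le_of_subadditive_of_abs_homogeneous {V : Type*} [AddCommGroup V]
    [Module ℝ V] (N : V → ℝ) (hadd : ∀ v w : V, N (v + w) ≤ N v + N w)
    (hhom : ∀ (c : ℝ) (v : V), N (c • v) = |c| * N v) (r : ℝ) :
    Convex ℝ {v | N v ≤ r} := by
  have hconv := (Seminorm.of N hadd hhom).convexOn.convex_le r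
  simp only [Set.mem_univ, true_and] at hconv
  exact hconv

theorem smul_add_one_sub_smul_eq_taylor_step {V : Type*} [AddCommGroup V] [Module ℝ V]
    (u f g : V) (α t τ : ℝ) :
    α • (u + t • f) + (1 - α) • (u + τ • g) = u + (α * t) • f + ((1 - α) * τ) • g := by
  simp only [smul_add, smul_smul, sub_smul, one_smul]
  abel

noncomputable def taylorStepBound (c : ℝ) : ℝ := c * (√(c ^ 2 + 2) - c)

theorem taylorStepBound_sq_add (c : ℝ) :
    taylorStepBound c ^ 2 + 2 * c ^ 2 * taylorStepBound c = 2 * c ^ 2 := by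
  have hs : √(c ^ 2 + 2) ^ 2 = c ^ 2 + 2 := sq_sqrt (by positivity)
  unfold taylorStepBound
  linear_combination c ^ 2 * hs

theorem taylorStepBound_lt_one (c : ℝ) : taylorStepBound c < 1 := by
  have hs : √(c ^ 2 + 2) ^ 2 = c ^ 2 + 2 := sq_sqrt (by positivity)
  unfold taylorStepBound
  nlinarith [sq_nonneg (c * √(c ^ 2 + 2) - c ^ 2 - 1)]

theorem taylorStepBound_nonneg_iff (c : ℝ) : 0 ≤ taylorStepBound c ↔ 0 ≤ c := by
  have hc : c < √(c ^ 2 + 2) := lt_sqrt_of_sq_lt (by linarith)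
  exact mul_nonneg_iff_of_pos_right (sub_pos.2 hc)

theorem sq_le_two_mul_sq_mul_one_sub_of_le_taylorStepBound {c r : ℝ} (hr : 0 ≤ r)
    (hrc : r ≤ taylorStepBound c) : r ^ 2 ≤ 2 * c ^ 2 * (1 - r) := by
  nlinarith [taylorStepBound_sq_add c, sq_nonneg c]

theorem taylor_condition_from_FE_and_SD_general
    {V : Type*} [AddCommGroup V] [Module ℝ V]
    (N : V → ℝ)
    (hadd : ∀ v w : V, N (v + w) ≤ N v + N w)
    (hhom : ∀ (c : ℝ) (v : V), N (c • v) = |c| * N v)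
    (F G : V → V) (dtFE Kt : ℝ) (hdtFE : 0 < dtFE)
    (hFE : ∀ (v : V) (h : ℝ), 0 ≤ h → h ≤ dtFE → N (v + h • F v) ≤ N v)
    (hSD : ∀ (v : V) (h : ℝ), 0 ≤ h → h ≤ Kt * dtFE → N (v + (h^2) • G v) ≤ N v) :
    ∀ (u : V) (h : ℝ), 0 ≤ h → h ≤ (Kt * (Real.sqrt (Kt^2 + 2) - Kt)) * dtFE →
      N (u + h • F u + ((1/2) * h^2) • G u) ≤ N u := by
  intro u h hh hhK
  set α := h / dtFE
  have hα0 : 0 ≤ α := div_nonneg hh hdtFE.le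
  have hαK : α ≤ taylorStepBound Kt := (div_le_iff₀ hdtFE).2 hhK
  have hα1 : α < 1 := hαK.trans_lt (taylorStepBound_lt_one Kt)
  have hKt : 0 ≤ Kt := (taylorStepBound_nonneg_iff Kt).1 (hα0.trans hαK)
  have hαdt : α * dtFE = h := div_mul_cancel₀ h hdtFE.ne'
  have hτsq : h ^ 2 / (2 * (1 - α)) ≤ (Kt * dtFE) ^ 2 := by
    rw [div_le_iff₀ (by linarith), ← hαdt]
    linear_combination dtFE ^ 2 * sq_le_two_mul_sq_mul_one_sub_of_le_taylorStepBound hα0 hαK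
  set τ := √(h ^ 2 / (2 * (1 - α)))
  have hτ : τ ≤ Kt * dtFE := sqrt_le_iff.2 ⟨by positivity, hτsq⟩
  have hsplit : u + h • F u + ((1/2) * h^2) • G u
      = α • (u + dtFE • F u) + (1 - α) • (u + τ ^ 2 • G u) := by
    have hweight : (1 - α) * (h ^ 2 / (2 * (1 - α))) = 1 / 2 * h ^ 2 := by
      field_simp [(sub_pos.2 hα1).ne']
    rw [smul_add_one_sub_smul_eq_taylor_step, sq_sqrt (by positivity), hαdt, hweight]
  rw [hsplit]
  exact convex_setOf_le_of_subadditive_of_abs_homogeneous N hadd hhom (N u)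
    (hFE u dtFE hdtFE.le le_rfl) (hSD u τ (sqrt_nonneg _) hτ) hα0 (by linarith) (by ring)

/-- If `F` satisfies the forward Euler condition up to `dtFE` and `G`
satisfies the second-derivative condition up to `K̃ · dtFE`, then the Taylor series
step is monotone for `0 ≤ h ≤ K · dtFE` with `K = K̃(√(K̃² + 2) − K̃)`. -/
theorem taylor_condition_from_FE_and_SD
    {V : Type*} [AddCommGroup V] [Module ℝ V]
    (N : V → ℝ)
    (hadd : ∀ v w : V, N (v + w) ≤ N v + N w)
    (hhom : ∀ (c : ℝ) (v : V), N (c • v) = |c| * N v)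
    (F G : V → V) (dtFE Kt : ℝ) (hdtFE : 0 < dtFE) (hKt : 0 < Kt)
    (hFE : ∀ (v : V) (h : ℝ), 0 ≤ h → h ≤ dtFE → N (v + h • F v) ≤ N v)
    (hSD : ∀ (v : V) (h : ℝ), 0 ≤ h → h ≤ Kt * dtFE → N (v + (h^2) • G v) ≤ N v) :
    ∀ (u : V) (h : ℝ), 0 ≤ h → h ≤ (Kt * (Real.sqrt (Kt^2 + 2) - Kt)) * dtFE →
      N (u + h • F u + ((1/2) * h^2) • G u) ≤ N u :=
  taylor_condition_from_FE_and_SD_general N hadd hhom F G dtFE Kt hdtFE hFE hSD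
end

section
/- The second-order Taylor (Lax–Wendroff-type with one-sided second difference) step (u^{n+1})_j = u_j + λ(u_{j+1} − u_j) + (λ²/2)(u_{j+2} − 2u_{j+1} + u_j) on periodic grid data is total variation diminishing for all 0 ≤ λ ≤ 1. -/
/-- The second-order Taylor (Lax–Wendroff-type with one-sided second
difference) step
`(T u)_j = u_j + λ(u_{j+1} − u_j) + (λ²/2)(u_{j+2} − 2u_{j+1} + u_j)` on periodic
grid data is total variation diminishing for all `0 ≤ λ ≤ 1`. -/
theorem taylor_lax_wendroff_TVD
    (M : ℕ) [NeZero M] (u : ZMod M → ℝ) (lam : ℝ)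
    (hlam0 : 0 ≤ lam) (hlam1 : lam ≤ 1)
    (T : (ZMod M → ℝ) → (ZMod M → ℝ))
    (hT : ∀ v : ZMod M → ℝ, ∀ j : ZMod M,
      T v j = v j + lam * (v (j + 1) - v j)
        + (lam^2 / 2) * (v (j + 2) - 2 * v (j + 1) + v j)) :
    ∑ j : ZMod M, |T u (j + 1) - T u j| ≤ ∑ j : ZMod M, |u (j + 1) - u j| := by
  set d : ZMod M → ℝ := fun j => u (j + 1) - u j with hd
  set a : ℝ := 1 - lam + lam ^ 2 / 2 with ha
  set b : ℝ := lam - lam ^ 2 with hb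
  set c : ℝ := lam ^ 2 / 2 with hc
  have ha0 : 0 ≤ a := by nlinarith
  have hb0 : 0 ≤ b := by nlinarith
  have hc0 : 0 ≤ c := by nlinarith
  have key : ∀ j : ZMod M, T u (j + 1) - T u j
      = a * d j + b * d (j + 1) + c * d (j + 2) := by
    intro j
    have e1 : j + 1 + 1 = j + 2 := by ring
    have e2 : j + 1 + 2 = j + 3 := by ring
    have e3 : j + 2 + 1 = j + 3 := by ring
    simp only [hd, hT, e1, e2, e3, ha, hb, hc]
    ring
  have hbound : ∀ j : ZMod M, |T u (j + 1) - T u j|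
      ≤ a * |d j| + b * |d (j + 1)| + c * |d (j + 2)| := by
    intro j
    rw [key j]
    calc |a * d j + b * d (j + 1) + c * d (j + 2)|
        ≤ |a * d j + b * d (j + 1)| + |c * d (j + 2)| := abs_add_le _ _
      _ ≤ |a * d j| + |b * d (j + 1)| + |c * d (j + 2)| := by
          gcongr; exact abs_add_le _ _
      _ = a * |d j| + b * |d (j + 1)| + c * |d (j + 2)| := by
          rw [abs_mul, abs_mul, abs_mul, abs_of_nonneg ha0, abs_of_nonneg hb0,
            abs_of_nonneg hc0]
  have shift : ∀ k : ZMod M, ∑ j : ZMod M, |d (j + k)| = ∑ j : ZMod M, |d j| := by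
    intro k
    exact Equiv.sum_comp (Equiv.addRight k) (fun j => |d j|)
  calc ∑ j : ZMod M, |T u (j + 1) - T u j|
      ≤ ∑ j : ZMod M, (a * |d j| + b * |d (j + 1)| + c * |d (j + 2)|) :=
        Finset.sum_le_sum fun j _ => hbound j
    _ = a * ∑ j : ZMod M, |d j| + b * ∑ j : ZMod M, |d (j + 1)|
        + c * ∑ j : ZMod M, |d (j + 2)| := by
        rw [Finset.sum_add_distrib, Finset.sum_add_distrib, Finset.mul_sum,
          Finset.mul_sum, Finset.mul_sum]
    _ = (a + b + c) * ∑ j : ZMod M, |d j| := by rw [shift 1, shift 2]; ring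
    _ = ∑ j : ZMod M, |d j| := by
        have h1 : a + b + c = 1 := by rw [ha, hb, hc]; ring
        rw [h1, one_mul]
end

section
/- Let A be a strictly lower triangular s×s real matrix and suppose for all sufficiently small r > 0 the matrix (I + rS)⁻¹ (rS) has nonnegative entries, where S is the (s+1)×(s+1) block matrix [[A, 0],[bᵀ, 0]]. If the method is DJ-irreducible, i.e. there is no partition T₁ ∪ T₂ = {1,…,s}, T₁ ≠ ∅, with b_j = 0 for all j ∈ T₁ and a_{ij} = 0 for all i ∈ T₂, j ∈ T₁, then every component of b is strictly positive. -/
open Finset in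
private lemma poly_nonneg_head (n : ℕ) (hn : 0 < n) (f : ℕ → ℝ) (r0 : ℝ) (hr0 : 0 < r0)
    (h : ∀ r : ℝ, 0 < r → r ≤ r0 → 0 ≤ ∑ k ∈ Finset.range n, f k * r ^ k) :
    0 ≤ f 0 := by
  have hcont : Continuous fun r : ℝ => ∑ k ∈ Finset.range n, f k * r ^ k := by
    continuity
  have hval : (∑ k ∈ Finset.range n, f k * (0:ℝ) ^ k) = f 0 := by
    rw [Finset.sum_eq_single_of_mem 0 (Finset.mem_range.mpr hn)]
    · simp
    · intro k _ hk
      simp [zero_pow hk]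
  have htend : Filter.Tendsto (fun r : ℝ => ∑ k ∈ Finset.range n, f k * r ^ k)
      (nhdsWithin 0 (Set.Ioi 0)) (nhds (f 0)) := by
    rw [← hval]
    exact (hcont.tendsto 0).mono_left nhdsWithin_le_nhds
  refine ge_of_tendsto htend ?_
  have hmem : Set.Ioc (0:ℝ) r0 ∈ nhdsWithin (0:ℝ) (Set.Ioi 0) :=
    Ioc_mem_nhdsGT_of_mem ⟨le_refl 0, hr0⟩
  exact Filter.eventually_of_mem hmem (fun r hr => h r hr.1 hr.2)

/-- For the block matrix `S = [[A, 0], [bᵀ, 0]]` with `A` strictly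
lower triangular, if `(I + rS)⁻¹ (rS)` has nonnegative entries for all
sufficiently small `r > 0` and the method is DJ-irreducible, then every
component of `b` is strictly positive. -/
theorem irreducible_SSP_implies_b_positive
    (s : ℕ) (A : Matrix (Fin s) (Fin s) ℝ) (b : Fin s → ℝ)
    (hA : ∀ i j : Fin s, (i : ℕ) ≤ (j : ℕ) → A i j = 0)
    (S : Matrix (Fin (s + 1)) (Fin (s + 1)) ℝ)
    (hS : ∀ i j : Fin (s + 1), S i j =
      if hi : (i : ℕ) < s then
        (if hj : (j : ℕ) < s then A ⟨i, hi⟩ ⟨j, hj⟩ else 0)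
      else
        (if hj : (j : ℕ) < s then b ⟨j, hj⟩ else 0))
    (hpos : ∃ r0 : ℝ, 0 < r0 ∧ ∀ r : ℝ, 0 < r → r ≤ r0 →
      ∀ i j : Fin (s + 1), 0 ≤ ((1 + r • S)⁻¹ * (r • S)) i j)
    (hirr : ¬ ∃ T1 T2 : Finset (Fin s), T1.Nonempty ∧ Disjoint T1 T2 ∧
      T1 ∪ T2 = Finset.univ ∧ (∀ j ∈ T1, b j = 0) ∧
      (∀ i ∈ T2, ∀ j ∈ T1, A i j = 0)) :
    ∀ j : Fin s, 0 < b j := by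
  -- S is strictly lower triangular
  have hS0 : ∀ i j : Fin (s+1), (i : ℕ) ≤ (j : ℕ) → S i j = 0 := by
    intro i j hij
    rw [hS]
    split_ifs with hi hj hj
    · exact hA _ _ hij
    · rfl
    · omega
    · rfl
  -- powers of S vanish below the k-th subdiagonal
  have hpow : ∀ k : ℕ, ∀ i j : Fin (s+1), (i : ℕ) < (j : ℕ) + k → (S ^ k) i j = 0 := by
    intro k
    induction k with
    | zero =>
      intro i j h
      simp only [pow_zero]
      exact Matrix.one_apply_ne (by intro he; subst he; omega)
    | succ k ih =>
      intro i j h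
      rw [pow_succ, Matrix.mul_apply]
      apply Finset.sum_eq_zero
      intro m _
      by_cases hm : (m : ℕ) ≤ (j : ℕ)
      · rw [hS0 m j hm, mul_zero]
      · rw [ih i m (by omega), zero_mul]
  have hnil : S ^ (s+1) = 0 := by
    ext i j
    rw [hpow (s+1) i j (by omega)]
    rfl
  -- explicit Neumann series for the inverse
  have hM : ∀ r : ℝ, (1 + r • S)⁻¹ * (r • S)
      = ∑ k ∈ Finset.range (s+1), (((-r)^k) * r) • S ^ (k+1) := by
    intro r
    have step : ∀ k : ℕ, (r • S) * (((-r)^k) • S ^ k) = -(((-r)^(k+1)) • S ^ (k+1)) := by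
      intro k
      rw [Matrix.smul_mul, Matrix.mul_smul, smul_smul, ← neg_smul, ← pow_succ']
      congr 1
      ring
    have hinv : (1 + r • S)⁻¹ = ∑ k ∈ Finset.range (s+1), ((-r)^k) • S ^ k := by
      apply Matrix.inv_eq_right_inv
      rw [add_mul, one_mul, Finset.mul_sum]
      have h2 : ∑ k ∈ Finset.range (s+1), (r • S) * (((-r)^k) • S ^ k)
          = -(∑ k ∈ Finset.range (s+1), ((-r)^(k+1)) • S ^ (k+1)) := by
        rw [← Finset.sum_neg_distrib]
        exact Finset.sum_congr rfl (fun k _ => step k)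
      rw [h2]
      rw [Finset.sum_range_succ' (fun k => ((-r)^k) • S ^ k) s,
        Finset.sum_range_succ (fun k => ((-r)^(k+1)) • S ^ (k+1)) s]
      simp [hnil]
    rw [hinv, Finset.sum_mul]
    apply Finset.sum_congr rfl
    intro k _
    rw [Matrix.smul_mul, Matrix.mul_smul, smul_smul, ← pow_succ]
  -- entrywise polynomial expression
  have hMentry : ∀ r : ℝ, ∀ i j : Fin (s+1),
      ((1 + r • S)⁻¹ * (r • S)) i j
        = r * ∑ k ∈ Finset.range (s+1), ((-1:ℝ)^k * (S ^ (k+1)) i j) * r ^ k := by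
    intro r i j
    rw [hM r, Matrix.sum_apply, Finset.mul_sum]
    apply Finset.sum_congr rfl
    intro k _
    rw [Matrix.smul_apply, smul_eq_mul, neg_pow]
    ring
  obtain ⟨r0, hr0, hpos'⟩ := hpos
  -- Fact A : all entries of S are nonnegative
  have factA : ∀ i j : Fin (s+1), 0 ≤ S i j := by
    intro i j
    have h := poly_nonneg_head (s+1) (by omega)
      (fun k => (-1:ℝ)^k * (S ^ (k+1)) i j) r0 hr0 ?_
    · simpa using h
    · intro r hr hrr0
      have h1 := hpos' r hr hrr0 i j
      rw [hMentry r i j] at h1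
      nlinarith [h1]
  -- identify entries of S
  have hSb : ∀ j : Fin s, S (Fin.last s) j.castSucc = b j := by
    intro j
    rw [hS, dif_neg (by simp), dif_pos (by simpa using j.isLt)]
    congr 1
  have hSA : ∀ i j : Fin s, S i.castSucc j.castSucc = A i j := by
    intro i j
    rw [hS, dif_pos (by simpa using i.isLt), dif_pos (by simpa using j.isLt)]
    congr 1 <;> exact Fin.ext (by simp)
  -- Fact B : if b j = 0 then b i * A i j = 0 for all i
  have factB : ∀ j : Fin s, b j = 0 → ∀ i : Fin s, b i * A i j = 0 := by
    intro j hbj i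
    have hs : 0 < s := j.pos
    -- second power entry is ≤ 0
    have hle : 0 ≤ -(S ^ 2) (Fin.last s) j.castSucc := by
      have h := poly_nonneg_head s hs
        (fun k => (-1:ℝ)^(k+1) * (S ^ (k+2)) (Fin.last s) j.castSucc) r0 hr0 ?_
      · simpa using h
      · intro r hr hrr0
        have h1 := hpos' r hr hrr0 (Fin.last s) j.castSucc
        rw [hMentry r (Fin.last s) j.castSucc] at h1
        have hf0 : ((-1:ℝ)^0 * (S ^ (0+1)) (Fin.last s) j.castSucc) = 0 := by
          simp [hSb j, hbj]
        rw [Finset.sum_range_succ' (fun k =>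
            ((-1:ℝ)^k * (S ^ (k+1)) (Fin.last s) j.castSucc) * r ^ k) s, hf0] at h1
        have h2 : 0 ≤ r * (r * ∑ k ∈ Finset.range s,
            ((-1:ℝ)^(k+1) * (S ^ (k+2)) (Fin.last s) j.castSucc) * r ^ k) := by
          convert h1 using 2
          rw [Finset.mul_sum]
          simp only [zero_mul, add_zero]
          apply Finset.sum_congr rfl
          intro k _
          ring
        nlinarith [h2, mul_pos hr hr]
    -- second power entry is ≥ 0 and a sum of nonnegative terms
    have hsum : (S ^ 2) (Fin.last s) j.castSucc
        = ∑ m : Fin (s+1), S (Fin.last s) m * S m j.castSucc := by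
      rw [pow_two, Matrix.mul_apply]
    have hterm : ∀ m ∈ Finset.univ, 0 ≤ S (Fin.last s) m * S m j.castSucc :=
      fun m _ => mul_nonneg (factA _ _) (factA _ _)
    have hzero : ∑ m : Fin (s+1), S (Fin.last s) m * S m j.castSucc = 0 := by
      have h1 : (S ^ 2) (Fin.last s) j.castSucc ≤ 0 := by linarith
      have h2 : 0 ≤ (S ^ 2) (Fin.last s) j.castSucc := by
        rw [hsum]; exact Finset.sum_nonneg hterm
      rw [← hsum]
      linarith
    have heach := (Finset.sum_eq_zero_iff_of_nonneg hterm).mp hzero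
    have := heach i.castSucc (Finset.mem_univ _)
    rwa [hSb i, hSA i j] at this
  -- conclude
  by_contra hcon
  push_neg at hcon
  obtain ⟨j0, hj0⟩ := hcon
  have hbnn : ∀ j : Fin s, 0 ≤ b j := by
    intro j
    have := factA (Fin.last s) j.castSucc
    rwa [hSb j] at this
  have hbj0 : b j0 = 0 := le_antisymm hj0 (hbnn j0)
  apply hirr
  refine ⟨Finset.univ.filter (fun j => b j = 0), Finset.univ.filter (fun j => b j ≠ 0),
    ⟨j0, by simp [hbj0]⟩, ?_, ?_, ?_, ?_⟩
  · rw [Finset.disjoint_left]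
    intro a ha hb
    simp only [Finset.mem_filter] at ha hb
    exact hb.2 ha.2
  · ext x
    by_cases hx : b x = 0 <;> simp [hx]
  · intro j hj
    simpa using hj
  · intro i hi j hj
    simp only [Finset.mem_filter] at hi hj
    have h0 := factB j hj.2 i
    have hbi : 0 < b i := lt_of_le_of_ne (hbnn i) (Ne.symm hi.2)
    exact (mul_eq_zero.mp h0).resolve_left (ne_of_gt hbi)
end

section
/- Suppose vectors b, c ∈ ℝˢ, matrix A ∈ ℝ^{s×s}, ĉ ∈ ℝˢ satisfy the three fifth-order conditions: bᵀc⁴ + 4b̂ᵀc³ = 1/5, bᵀ(c²⊙Ac) + bᵀ(c²⊙ĉ) + b̂ᵀc³ + 2b̂ᵀ(c⊙Ac) + 2b̂ᵀ(c⊙ĉ) = 1/10, and bᵀ(Ac⊙Ac) + 2bᵀ(ĉ⊙Ac) + bᵀĉ² + 2b̂ᵀ(c⊙Ac) + 2b̂ᵀ(c⊙ĉ) = 1/20, where ⊙ is componentwise product and powers are componentwise. Then bᵀ(Ac + ĉ − c²/2)² = 0. In particular if every component of b is strictly positive then Ac + ĉ = c²/2. -/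
/-- The three fifth-order conditions force the stage-order-two
residual `τ₂ = Ac + ĉ − c²/2` to satisfy `bᵀ τ₂² = 0`; if moreover `b > 0`
componentwise then `Ac + ĉ = c²/2`. -/
theorem fifth_order_forces_stage_order_two
    (s : ℕ) (b bh c ch : Fin s → ℝ) (A : Matrix (Fin s) (Fin s) ℝ)
    (h1 : ∑ i, b i * (c i)^4 + 4 * ∑ i, bh i * (c i)^3 = 1/5)
    (h2 : ∑ i, b i * ((c i)^2 * A.mulVec c i)
        + ∑ i, b i * ((c i)^2 * ch i)
        + ∑ i, bh i * (c i)^3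
        + 2 * ∑ i, bh i * (c i * A.mulVec c i)
        + 2 * ∑ i, bh i * (c i * ch i) = 1/10)
    (h3 : ∑ i, b i * (A.mulVec c i * A.mulVec c i)
        + 2 * ∑ i, b i * (ch i * A.mulVec c i)
        + ∑ i, b i * (ch i)^2
        + 2 * ∑ i, bh i * (c i * A.mulVec c i)
        + 2 * ∑ i, bh i * (c i * ch i) = 1/20) :
    (∑ i, b i * (A.mulVec c i + ch i - (c i)^2 / 2)^2 = 0)
    ∧ ((∀ i, 0 < b i) → ∀ i, A.mulVec c i + ch i = (c i)^2 / 2) := by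
  have key : ∑ i, b i * (A.mulVec c i + ch i - (c i)^2 / 2)^2
      = (1/4) * (∑ i, b i * (c i)^4 + 4 * ∑ i, bh i * (c i)^3)
        - (∑ i, b i * ((c i)^2 * A.mulVec c i)
          + ∑ i, b i * ((c i)^2 * ch i)
          + ∑ i, bh i * (c i)^3
          + 2 * ∑ i, bh i * (c i * A.mulVec c i)
          + 2 * ∑ i, bh i * (c i * ch i))
        + (∑ i, b i * (A.mulVec c i * A.mulVec c i)
          + 2 * ∑ i, b i * (ch i * A.mulVec c i)
          + ∑ i, b i * (ch i)^2
          + 2 * ∑ i, bh i * (c i * A.mulVec c i)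
          + 2 * ∑ i, bh i * (c i * ch i)) := by
    simp only [Finset.mul_sum, ← Finset.sum_add_distrib, ← Finset.sum_sub_distrib]
    exact Finset.sum_congr rfl fun i _ => by ring
  have hzero : ∑ i, b i * (A.mulVec c i + ch i - (c i)^2 / 2)^2 = 0 := by
    rw [key, h1, h2, h3]; norm_num
  refine ⟨hzero, fun hb i => ?_⟩
  have hterm : ∀ j ∈ Finset.univ, 0 ≤ b j * (A.mulVec c j + ch j - (c j)^2 / 2)^2 :=
    fun j _ => mul_nonneg (hb j).le (sq_nonneg _)
  have := (Finset.sum_eq_zero_iff_of_nonneg hterm).mp hzero i (Finset.mem_univ i)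
  have h0 : (A.mulVec c i + ch i - (c i)^2 / 2)^2 = 0 := by
    rcases mul_eq_zero.mp this with h | h
    · exact absurd h (hb i).ne'
    · exact h
  have := pow_eq_zero_iff (n := 2) (by norm_num) |>.mp h0
  linarith
end

section
/- For the three-stage fourth-order M3 family of SSP-TS methods with parameter K ∈ (0,1], the coefficients a_{21} = (K+1)/2, a_{31} = (K+1)(−K³−2K²+14K+3)/(2(K+2)³), a_{32} = (K+1)(K−3)²/(2(K+2)³), â_{21} = (K+1)²/8, â_{31} = K(−K²+2K+3)²/(8(K+2)³), b₁ = (3K⁵−9K⁴−22K³+30K²+21K+11)/(3(K−3)²(K+1)³), b₂ = 2K/(3(K+1)³), b₃ = 2(K+2)³/(3(K−3)²(K+1)³), b̂₁ = −(−3K³+3K²+K+1)/(6(K−3)(K+1)²) are all nonnegative for K ∈ (0,1]. -/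
/-- The coefficients of the three-stage fourth-order M3 family of
SSP-TS methods are all nonnegative for `K ∈ (0, 1]`. -/
theorem M3_3s4p_coefficients_nonneg
    (K : ℝ) (hK0 : 0 < K) (hK1 : K ≤ 1) :
    0 ≤ (K + 1) / 2 ∧
    0 ≤ (K + 1) * (-K^3 - 2*K^2 + 14*K + 3) / (2 * (K + 2)^3) ∧
    0 ≤ (K + 1) * (K - 3)^2 / (2 * (K + 2)^3) ∧
    0 ≤ (K + 1)^2 / 8 ∧
    0 ≤ K * (-K^2 + 2*K + 3)^2 / (8 * (K + 2)^3) ∧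
    0 ≤ (3*K^5 - 9*K^4 - 22*K^3 + 30*K^2 + 21*K + 11) / (3 * (K - 3)^2 * (K + 1)^3) ∧
    0 ≤ 2*K / (3 * (K + 1)^3) ∧
    0 ≤ 2 * (K + 2)^3 / (3 * (K - 3)^2 * (K + 1)^3) ∧
    0 ≤ -(-3*K^3 + 3*K^2 + K + 1) / (6 * (K - 3) * (K + 1)^2) := by
  have h2 : (0:ℝ) < K + 2 := by linarith
  have h1 : (0:ℝ) < K + 1 := by linarith
  have h3 : K - 3 < 0 := by linarith
  refine ⟨by positivity, ?_, ?_, by positivity, ?_, ?_, ?_, ?_, ?_⟩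
  · apply div_nonneg _ (by positivity)
    have hcube : K^3 ≤ 1 := pow_le_one₀ hK0.le hK1
    have hsq : K^2 ≤ 1 := by nlinarith
    nlinarith [mul_pos hK0 h1]
  · positivity
  · positivity
  · apply div_nonneg _ (by positivity)
    nlinarith [sq_nonneg K, sq_nonneg (K-1), sq_nonneg (K+1), pow_pos hK0 3, pow_pos hK0 5]
  · positivity
  · positivity
  · rw [div_nonneg_iff]
    right
    constructor
    · nlinarith [sq_nonneg K, mul_nonneg (sq_nonneg K) (sub_nonneg.2 hK1)]
    · nlinarith [mul_nonpos_of_nonneg_of_nonpos (sq_nonneg (K+1)) h3.le]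
end

section
/- If both the forward Euler condition ‖u + hF(u)‖ ≤ ‖u‖ (0 ≤ h ≤ Δt_FE) and the Taylor series condition ‖u + hF(u) + (h²/2)G(u)‖ ≤ ‖u‖ (0 ≤ h ≤ K·Δt_FE) hold with K ≥ 1, then the single Taylor step y = u + ΔtF(u) + (1/2)Δt²G(u) followed by the convex update u⁺ = θ u + (1−θ)y + (1−θ)μΔt F(y), with 0 ≤ θ ≤ 1 and 0 ≤ μΔt ≤ Δt_FE and Δt ≤ K·Δt_FE, satisfies ‖u⁺‖ ≤ ‖u‖. -/
/-- Under the forward Euler condition (radius `dtFE`) and the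
Taylor series condition (radius `K·dtFE`, `K ≥ 1`), a Taylor step followed by a
convex forward-Euler update is monotone in the convex functional `N`. -/
theorem taylor_then_convex_euler_monotone
    {V : Type*} [AddCommGroup V] [Module ℝ V]
    (N : V → ℝ)
    (hadd : ∀ v w : V, N (v + w) ≤ N v + N w)
    (hhom : ∀ (c : ℝ) (v : V), N (c • v) = |c| * N v)
    (F G : V → V) (dtFE K : ℝ) (hK : 1 ≤ K)
    (hFE : ∀ (v : V) (h : ℝ), 0 ≤ h → h ≤ dtFE → N (v + h • F v) ≤ N v)
    (hTS : ∀ (v : V) (h : ℝ), 0 ≤ h → h ≤ K * dtFE →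
      N (v + h • F v + (h^2 / 2) • G v) ≤ N v)
    (u y : V) (Δt θ μ : ℝ)
    (hΔt0 : 0 ≤ Δt) (hΔtK : Δt ≤ K * dtFE)
    (hθ0 : 0 ≤ θ) (hθ1 : θ ≤ 1)
    (hμ0 : 0 ≤ μ * Δt) (hμ1 : μ * Δt ≤ dtFE)
    (hy : y = u + Δt • F u + ((1/2) * Δt^2) • G u) :
    N (θ • u + (1 - θ) • y + ((1 - θ) * (μ * Δt)) • F y) ≤ N u := by
  have hNy : N y ≤ N u := by
    have := hTS u Δt hΔt0 hΔtK
    rw [hy]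
    have : (1/2) * Δt^2 = Δt^2 / 2 := by ring
    rw [this]
    exact hTS u Δt hΔt0 hΔtK
  have hNz : N (y + (μ * Δt) • F y) ≤ N u :=
    le_trans (hFE y (μ * Δt) hμ0 hμ1) hNy
  have hrw : θ • u + (1 - θ) • y + ((1 - θ) * (μ * Δt)) • F y
      = θ • u + (1 - θ) • (y + (μ * Δt) • F y) := by
    rw [smul_add, mul_smul]; abel
  rw [hrw]
  calc N (θ • u + (1 - θ) • (y + (μ * Δt) • F y))
      ≤ N (θ • u) + N ((1 - θ) • (y + (μ * Δt) • F y)) := hadd _ _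
    _ = θ * N u + (1 - θ) * N (y + (μ * Δt) • F y) := by
        rw [hhom, hhom, abs_of_nonneg hθ0, abs_of_nonneg (by linarith)]
    _ ≤ θ * N u + (1 - θ) * N u := by
        have := mul_le_mul_of_nonneg_left hNz (by linarith : (0:ℝ) ≤ 1 - θ)
        linarith
    _ = N u := by ring
end

section
/- If the matrices R = (I + rS + 2r̂(r̂−r)Ŝ)⁻¹, P = rR(S − 2r̂Ŝ), Q = 2r̂²RŜ satisfy (R + P + Q)e = e, all entries of P and Q are nonnegative, and Re ≥ 0 componentwise, and the stage vector satisfies Y = R(e uⁿ) + P(Y + (Δt/r)F(Y)) + Q(Y + (Δt/r̂)F(Y) + (Δt²/(2r̂²))G(Y)) with ‖Y_j + (Δt/r)F(Y_j)‖ ≤ ‖Y_j‖ and ‖Y_j + (Δt/r̂)F(Y_j) + (Δt²/(2r̂²))G(Y_j)‖ ≤ ‖Y_j‖ for all stages j, then max_j ‖Y_j‖ ≤ ‖uⁿ‖. -/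
/-!
Each stage is a nonnegative combination, with weights summing to one, of `uⁿ` and of
forward-Euler and Taylor steps taken from earlier stages. By the triangle inequality and
the monotonicity of those steps, `‖Yᵢ‖` is bounded by the same combination of `‖uⁿ‖` and
the `‖Yⱼ‖`, `j < i`; strong induction on the stage index then bounds it by `‖uⁿ‖`.
-/

open Finset

theorem le_of_le_explicit_convex_recursion {ι : Type*} [Fintype ι] [LinearOrder ι]
    (x a : ι → ℝ) (c : ι → ι → ℝ) (M : ℝ)
    (hc : ∀ i j, 0 ≤ c i j) (hc_lower : ∀ i j, i ≤ j → c i j = 0)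
    (hsum : ∀ i, a i + ∑ j, c i j = 1)
    (hx : ∀ i, x i ≤ a i * M + ∑ j, c i j * x j) (i : ι) :
    x i ≤ M := by
  induction i using WellFoundedLT.induction with
  | _ i ih =>
    have hterm : ∀ j, c i j * x j ≤ c i j * M := fun j => by
      rcases lt_or_ge j i with hji | hij
      · exact mul_le_mul_of_nonneg_left (ih j hji) (hc i j)
      · simp [hc_lower i j hij]
    calc x i ≤ a i * M + ∑ j, c i j * x j := hx i
      _ ≤ a i * M + ∑ j, c i j * M := add_le_add_right (sum_le_sum fun j _ => hterm j) _
      _ = M := by rw [← sum_mul, ← add_mul, hsum i, one_mul]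

namespace Seminorm

variable {V ι : Type*} [AddCommGroup V] [Module ℝ V] (p : Seminorm ℝ V)

theorem map_sum_smul_le (s : Finset ι) {c : ι → ℝ} (hc : ∀ j, 0 ≤ c j) (v : ι → V) :
    p (∑ j ∈ s, c j • v j) ≤ ∑ j ∈ s, c j * p (v j) :=
  (le_sum_of_subadditive p (map_zero p).le (map_add_le_add p) s _).trans <|
    sum_le_sum fun j _ => by rw [map_smul_eq_mul, Real.norm_of_nonneg (hc j)]

theorem map_smul_add_sum_add_sum_le [Fintype ι] (u : V) {a : ℝ} (ha : 0 ≤ a)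
    {b d : ι → ℝ} (hb : ∀ j, 0 ≤ b j) (hd : ∀ j, 0 ≤ d j) {v w : ι → V} {m : ι → ℝ}
    (hv : ∀ j, p (v j) ≤ m j) (hw : ∀ j, p (w j) ≤ m j) :
    p (a • u + ∑ j, b j • v j + ∑ j, d j • w j) ≤ a * p u + ∑ j, (b j + d j) * m j := by
  have hu : p (a • u) = a * p u := by rw [map_smul_eq_mul, Real.norm_of_nonneg ha]
  have hbv : ∑ j, b j * p (v j) ≤ ∑ j, b j * m j :=
    sum_le_sum fun j _ => mul_le_mul_of_nonneg_left (hv j) (hb j)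
  have hdw : ∑ j, d j * p (w j) ≤ ∑ j, d j * m j :=
    sum_le_sum fun j _ => mul_le_mul_of_nonneg_left (hw j) (hd j)
  calc p (a • u + ∑ j, b j • v j + ∑ j, d j • w j)
      ≤ p (a • u) + p (∑ j, b j • v j) + p (∑ j, d j • w j) :=
        (map_add_le_add p _ _).trans (add_le_add_left (map_add_le_add p _ _) _)
    _ ≤ a * p u + ∑ j, b j * m j + ∑ j, d j * m j := by
        rw [hu]
        gcongr
        · exact (p.map_sum_smul_le _ hb v).trans hbv
        · exact (p.map_sum_smul_le _ hd w).trans hdw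
    _ = a * p u + ∑ j, (b j + d j) * m j := by
        simp only [add_mul, sum_add_distrib, add_assoc]

end Seminorm

/-- If `R, P, Q` have row sums `(R+P+Q)e = e`, `P, Q` are
entrywise nonnegative and strictly lower triangular, `Re ≥ 0` componentwise,
the stage relation
`Y_i = (Re)_i uⁿ + Σ_j P_ij (Y_j + (Δt/r) F(Y_j)) + Σ_j Q_ij (Y_j + (Δt/r̂) F(Y_j) + (Δt²/(2r̂²)) G(Y_j))`
holds, and each forward-Euler-type and Taylor-type stage combination is
monotone in `N`, then every stage satisfies `N (Y_i) ≤ N uⁿ`. -/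
theorem canonical_shu_osher_monotonicity
    {V : Type*} [AddCommGroup V] [Module ℝ V]
    (N : V → ℝ)
    (hadd : ∀ v w : V, N (v + w) ≤ N v + N w)
    (hhom : ∀ (c : ℝ) (v : V), N (c • v) = |c| * N v)
    (s : ℕ) (R P Q : Matrix (Fin (s + 1)) (Fin (s + 1)) ℝ)
    (F G : V → V) (un : V) (Y : Fin (s + 1) → V) (Δt r rh : ℝ)
    (hPpos : ∀ i j, 0 ≤ P i j) (hQpos : ∀ i j, 0 ≤ Q i j)
    (hRe : ∀ i, 0 ≤ ∑ j, R i j)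
    (hrow : ∀ i, ∑ j, (R i j + P i j + Q i j) = 1)
    (hPlow : ∀ i j : Fin (s + 1), (i : ℕ) ≤ (j : ℕ) → P i j = 0)
    (hQlow : ∀ i j : Fin (s + 1), (i : ℕ) ≤ (j : ℕ) → Q i j = 0)
    (hstage : ∀ i, Y i = (∑ j, R i j) • un
      + ∑ j, P i j • (Y j + (Δt / r) • F (Y j))
      + ∑ j, Q i j • (Y j + (Δt / rh) • F (Y j) + (Δt^2 / (2 * rh^2)) • G (Y j)))
    (hFEmono : ∀ j, N (Y j + (Δt / r) • F (Y j)) ≤ N (Y j))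
    (hTSmono : ∀ j, N (Y j + (Δt / rh) • F (Y j) + (Δt^2 / (2 * rh^2)) • G (Y j)) ≤ N (Y j)) :
    ∀ i, N (Y i) ≤ N un := by
  let p : Seminorm ℝ V := Seminorm.of N hadd fun c v => by rw [Real.norm_eq_abs, hhom]
  refine le_of_le_explicit_convex_recursion (fun i => N (Y i)) (fun i => ∑ j, R i j)
    (fun i j => P i j + Q i j) (N un) (fun i j => add_nonneg (hPpos i j) (hQpos i j))
    (fun i j hij => by simp [hPlow i j hij, hQlow i j hij]) (fun i => ?_) (fun i => ?_)
  · rw [← hrow i, sum_add_distrib, sum_add_distrib, sum_add_distrib, add_assoc]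
  · conv_lhs => rw [hstage i]
    exact p.map_smul_add_sum_add_sum_le un (hRe i) (hPpos i) (hQpos i) hFEmono hTSmono
end
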